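/- arXiv:math/0310376 — 2 statements merged into one kernel-verified Lean document; each statement's English description precedes it below -/
import Mathlib

section
/- Let b ⊆ K[x0,...,xn] be a Borel-fixed monomial ideal. Then b is saturated with respect to the irrelevant maximal ideal if and only if no minimal generator of b is divisible by x_n. -/
open MvPolynomial

variable {K : Type} [Field K]

/-- `I` is a monomial ideal. -/
def IsMonomialIdeal {m : ℕ} (I : Ideal (MvPolynomial (Fin m) K)) : Prop :=
  ∀ f ∈ I, ∀ p ∈ f.support, (monomial p (1 : K)) ∈ I

/-- Borel-fixedness: closed under the elementary moves sending `x_(i+1)` to `x_i`. -/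
def BorelFixed {n : ℕ} (I : Ideal (MvPolynomial (Fin (n + 2)) K)) : Prop :=
  ∀ p : Fin (n + 2) →₀ ℕ, monomial p (1 : K) ∈ I → ∀ i : Fin (n + 1), 0 < p i.succ →
    monomial (p + Finsupp.single i.castSucc 1 - Finsupp.single i.succ 1) (1 : K) ∈ I

/-- `x^p` is a minimal (monomial) generator of `I`. -/
def IsMinGen {m : ℕ} (I : Ideal (MvPolynomial (Fin m) K)) (p : Fin m →₀ ℕ) : Prop :=
  monomial p (1 : K) ∈ I ∧ ∀ q : Fin m →₀ ℕ, q ≤ p → q ≠ p → monomial q (1 : K) ∉ I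

/-- `I` is saturated with respect to the irrelevant maximal ideal `(x0,...,xn)`. -/
def Saturated {m : ℕ} (I : Ideal (MvPolynomial (Fin m) K)) : Prop :=
  Submodule.colon I (Ideal.span (Set.range (X : Fin m → MvPolynomial (Fin m) K))) = I

/-- Any monomial in a monomial ideal is divisible by a minimal generator. -/
lemma exists_minGen {m : ℕ} (b : Ideal (MvPolynomial (Fin m) K)) :
    ∀ d : ℕ, ∀ r : Fin m →₀ ℕ, (∑ i, r i) = d → monomial r (1 : K) ∈ b →
      ∃ q, q ≤ r ∧ IsMinGen b q := by
  intro d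
  induction d using Nat.strong_induction_on with
  | _ d ih =>
    intro r hd hr
    by_cases h : ∀ q : Fin m →₀ ℕ, q ≤ r → q ≠ r → monomial q (1 : K) ∉ b
    · exact ⟨r, le_refl r, hr, h⟩
    · push_neg at h
      obtain ⟨q, hqr, hne, hq⟩ := h
      have hlt : (∑ i, q i) < d := by
        subst hd
        apply Finset.sum_lt_sum (fun i _ => Finsupp.le_def.mp hqr i)
        by_contra hc
        push_neg at hc
        exact hne (Finsupp.ext fun i =>
          le_antisymm (Finsupp.le_def.mp hqr i) (hc i (Finset.mem_univ i)))
      obtain ⟨q', hq'q, hq'⟩ := ih _ hlt q rfl hq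
      exact ⟨q', le_trans hq'q hqr, hq'⟩

/-- A monomial ideal is upward closed in the divisibility order. -/
lemma mem_of_le {m : ℕ} (b : Ideal (MvPolynomial (Fin m) K)) {p q : Fin m →₀ ℕ}
    (h : q ≤ p) (hq : monomial q (1 : K) ∈ b) : monomial p (1 : K) ∈ b := by
  have : monomial p (1 : K) = monomial (p - q) 1 * monomial q 1 := by
    rw [monomial_mul, one_mul, tsub_add_cancel_of_le h]
  rw [this]
  exact Ideal.mul_mem_left b _ hq

/-- The Borel chain: from `x^(q+x_last)` down to `x^(q+x_k)`. -/
lemma borel_chain {n : ℕ} (b : Ideal (MvPolynomial (Fin (n + 2)) K)) (hB : BorelFixed b)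
    (q : Fin (n + 2) →₀ ℕ)
    (hp : monomial (q + Finsupp.single (Fin.last (n + 1)) 1) (1 : K) ∈ b) :
    ∀ m : ℕ, ∀ hm : m ≤ n + 1,
      monomial (q + Finsupp.single (⟨n + 1 - m, by omega⟩ : Fin (n + 2)) 1) (1 : K) ∈ b := by
  intro m
  induction m with
  | zero =>
    intro _
    have h0 : (⟨n + 1 - 0, by omega⟩ : Fin (n + 2)) = Fin.last (n + 1) := by
      apply Fin.ext; show n + 1 - 0 = n + 1; omega
    rw [h0]; exact hp
  | succ m ih =>
    intro hm
    have hmn : m ≤ n := by omega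
    have hmem := ih (by omega)
    have hs : (⟨n + 1 - m, by omega⟩ : Fin (n + 2)) = (⟨n - m, by omega⟩ : Fin (n + 1)).succ := by
      apply Fin.ext; show n + 1 - m = n - m + 1; omega
    rw [hs] at hmem
    have hpos : ∀ s : Fin (n + 2), 0 < ((q + Finsupp.single s 1 : Fin (n + 2) →₀ ℕ)) s := by
      intro s; simp
    have hres := hB _ hmem ⟨n - m, by omega⟩ (hpos _)
    have hc : (⟨n + 1 - (m + 1), by omega⟩ : Fin (n + 2))
        = (⟨n - m, by omega⟩ : Fin (n + 1)).castSucc := by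
      apply Fin.ext; show n + 1 - (m + 1) = n - m; omega
    rw [hc]
    have heq : q + Finsupp.single (⟨n - m, by omega⟩ : Fin (n + 1)).succ 1
          + Finsupp.single (⟨n - m, by omega⟩ : Fin (n + 1)).castSucc 1
          - Finsupp.single (⟨n - m, by omega⟩ : Fin (n + 1)).succ 1
        = q + Finsupp.single (⟨n - m, by omega⟩ : Fin (n + 1)).castSucc 1 := by
      ext x
      simp only [Finsupp.add_apply, Finsupp.tsub_apply, Finsupp.single_apply]
      split_ifs <;> omega
    rwa [heq] at hres

/-- A Borel-fixed monomial ideal is saturated iff no minimal generator is divisible by the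
last variable. -/
theorem stmt14 {n : ℕ} (b : Ideal (MvPolynomial (Fin (n + 2)) K))
    (hmon : IsMonomialIdeal b) (hB : BorelFixed b) :
    Saturated b ↔ ∀ p : Fin (n + 2) →₀ ℕ, IsMinGen b p → p (Fin.last (n + 1)) = 0 := by
  constructor
  · -- saturated → no min gen divisible by x_last
    intro hsat p hp
    by_contra hne0
    have hpos : 0 < p (Fin.last (n + 1)) := Nat.pos_of_ne_zero hne0
    set q : Fin (n + 2) →₀ ℕ := p - Finsupp.single (Fin.last (n + 1)) 1 with hq
    have hqp : q + Finsupp.single (Fin.last (n + 1)) 1 = p := by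
      ext i
      simp only [hq, Finsupp.add_apply, Finsupp.tsub_apply, Finsupp.single_apply]
      split_ifs with h
      · subst h; omega
      · omega
    -- x^(q + e_i) ∈ b for all i
    have hall : ∀ i : Fin (n + 2), monomial (q + Finsupp.single i 1) (1 : K) ∈ b := by
      intro i
      have h1 : monomial (q + Finsupp.single (Fin.last (n + 1)) 1) (1 : K) ∈ b := by
        rw [hqp]; exact hp.1
      have h2 := borel_chain b hB q h1 (n + 1 - i.val) (by omega)
      have hilt := i.isLt
      have : (⟨n + 1 - (n + 1 - i.val), by omega⟩ : Fin (n + 2)) = i := by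
        apply Fin.ext; show n + 1 - (n + 1 - i.val) = i.val; omega
      rwa [this] at h2
    -- hence x^q ∈ (b : m) = b
    have hcolon : monomial q (1 : K) ∈
        Submodule.colon b (Ideal.span (Set.range (X : Fin (n + 2) → MvPolynomial (Fin (n + 2)) K))) := by
      rw [Submodule.mem_colon]
      intro g hg
      induction hg using Submodule.span_induction with
      | mem x hx =>
        obtain ⟨i, rfl⟩ := hx
        have hX : (X i : MvPolynomial (Fin (n + 2)) K) = monomial (Finsupp.single i 1) 1 := by
          rw [← X_pow_eq_monomial, pow_one]
        rw [smul_eq_mul, hX, monomial_mul, one_mul]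
        exact hall i
      | zero => simp
      | add x y _ _ hx hy => rw [smul_add]; exact Ideal.add_mem b hx hy
      | smul a x _ hx => rw [smul_comm]; exact Ideal.mul_mem_left b a hx
    rw [hsat] at hcolon
    have hql : q (Fin.last (n + 1)) = p (Fin.last (n + 1)) - 1 := by
      rw [hq, Finsupp.tsub_apply, Finsupp.single_apply, if_pos rfl]
    have hqnep : q ≠ p := by
      intro hqe
      have h2 : q (Fin.last (n + 1)) = p (Fin.last (n + 1)) := by rw [hqe]
      rw [hql] at h2; omega
    exact hp.2 q (by rw [hq]; exact tsub_le_self) hqnep hcolon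
  · -- no min gen divisible by x_last → saturated
    intro h
    apply le_antisymm
    · -- colon ≤ b
      intro f hf
      rw [Submodule.mem_colon] at hf
      -- f * X last ∈ b
      have hfX : f * X (Fin.last (n + 1)) ∈ b := by
        have := hf (X (Fin.last (n + 1)))
          (Ideal.subset_span ⟨Fin.last (n + 1), rfl⟩)
        rwa [smul_eq_mul] at this
      -- each monomial of f is in b
      have hmono : ∀ p ∈ f.support, monomial p (1 : K) ∈ b := by
        intro p hpsupp
        -- x^(p + e_last) ∈ b
        have hcoeff : coeff (p + Finsupp.single (Fin.last (n + 1)) 1)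
            (f * X (Fin.last (n + 1))) = coeff p f := coeff_mul_X _ _ _
        have hsup : p + Finsupp.single (Fin.last (n + 1)) 1 ∈ (f * X (Fin.last (n + 1))).support := by
          rw [mem_support_iff, hcoeff]
          exact mem_support_iff.mp hpsupp
        have hpe : monomial (p + Finsupp.single (Fin.last (n + 1)) 1) (1 : K) ∈ b :=
          hmon _ hfX _ hsup
        -- extract a minimal generator
        obtain ⟨r, hrle, hr⟩ := exists_minGen b _ _ rfl hpe
        have hrlast : r (Fin.last (n + 1)) = 0 := h r hr
        have hrp : r ≤ p := by
          rw [Finsupp.le_def]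
          intro i
          have := Finsupp.le_def.mp hrle i
          simp only [Finsupp.add_apply, Finsupp.single_apply] at this
          by_cases hi : i = Fin.last (n + 1)
          · subst hi; omega
          · rw [if_neg (fun he => hi he.symm)] at this; omega
        exact mem_of_le b hrp hr.1
      -- conclude f ∈ b
      have hsum : (∑ v ∈ f.support, monomial v (coeff v f)) ∈ b := by
        apply Submodule.sum_mem
        intro p hpsupp
        have hcmul : monomial p (coeff p f) = C (coeff p f) * monomial p (1 : K) := by
          rw [C_mul_monomial, mul_one]
        rw [hcmul]
        exact Ideal.mul_mem_left b _ (hmono p hpsupp)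
      rwa [← f.as_sum] at hsum
    · -- b ≤ colon
      intro f hf
      rw [Submodule.mem_colon]
      intro g _
      rw [smul_eq_mul]
      exact Ideal.mul_mem_right g b hf
end

section
/- For a Borel-fixed monomial ideal b ⊆ K[x0,...,xn], one has (b : x_n^∞) = (b : x_n^k) for k ≫ 0, and this saturation equals the monomial ideal generated by all monomials obtained from minimal generators of b by deleting every factor of x_n. -/
open MvPolynomial

variable {K : Type} [Field K]

/-- The saturation `(b : x_n^∞) = ∪_k (b : x_n^k)` with respect to the last variable. -/
noncomputable def satLast {n : ℕ} (b : Ideal (MvPolynomial (Fin (n + 2)) K)) :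
    Ideal (MvPolynomial (Fin (n + 2)) K) :=
  ⨆ k : ℕ, Submodule.colon b
    (Ideal.span {monomial (Finsupp.single (Fin.last (n + 1)) k) (1 : K)})

/-- Every monomial in an ideal is divisible by a minimal monomial generator. -/
lemma exists_minGen_le_aux {m : ℕ} (b : Ideal (MvPolynomial (Fin m) K)) :
    ∀ N : ℕ, ∀ r : Fin m →₀ ℕ, (∑ i, r i) ≤ N → monomial r (1 : K) ∈ b →
      ∃ p, IsMinGen b p ∧ p ≤ r := by
  intro N
  induction N with
  | zero =>
    intro r hr hmem
    have hr0 : r = 0 := by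
      ext i
      have h1 : r i ≤ ∑ j, r j := Finset.single_le_sum (fun j _ => Nat.zero_le _)
        (Finset.mem_univ i)
      simp only [Finsupp.coe_zero, Pi.zero_apply]
      omega
    subst hr0
    refine ⟨0, ⟨hmem, fun q hq hqr => absurd ?_ hqr⟩, le_rfl⟩
    exact le_antisymm hq (Finsupp.le_def.mpr fun i => Nat.zero_le _)
  | succ N ih =>
    intro r hr hmem
    by_cases hmin : ∀ q : Fin m →₀ ℕ, q ≤ r → q ≠ r → monomial q (1 : K) ∉ b
    · exact ⟨r, ⟨hmem, hmin⟩, le_refl r⟩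
    · push_neg at hmin
      obtain ⟨q, hqle, hqne, hqmem⟩ := hmin
      have hlt : (∑ i, q i) < ∑ i, r i := by
        obtain ⟨i, hi⟩ := Finsupp.ne_iff.mp hqne
        exact Finset.sum_lt_sum (fun j _ => hqle j)
          ⟨i, Finset.mem_univ i, lt_of_le_of_ne (hqle i) hi⟩
      obtain ⟨p, hp, hple⟩ := ih q (by omega) hqmem
      exact ⟨p, hp, hple.trans hqle⟩

lemma exists_minGen_le {m : ℕ} (b : Ideal (MvPolynomial (Fin m) K)) (r : Fin m →₀ ℕ)
    (hmem : monomial r (1 : K) ∈ b) : ∃ p, IsMinGen b p ∧ p ≤ r :=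
  exists_minGen_le_aux b (∑ i, r i) r le_rfl hmem

lemma erase_mono {m : ℕ} (a : Fin m) {q r : Fin m →₀ ℕ} (h : q ≤ r) :
    Finsupp.erase a q ≤ Finsupp.erase a r := by
  intro i
  classical
  rw [Finsupp.erase_apply, Finsupp.erase_apply]
  split <;> simp [h i]

lemma erase_le_self {m : ℕ} (a : Fin m) (f : Fin m →₀ ℕ) : Finsupp.erase a f ≤ f := by
  intro i
  classical
  rw [Finsupp.erase_apply]
  split <;> simp

/-- For a Borel-fixed monomial ideal `b`, `(b : x_n^∞) = (b : x_n^k)` for `k ≫ 0`, and the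
saturation is generated by the monomials obtained from the minimal generators of `b` by
deleting all factors of `x_n`. -/
theorem stmt15 {n : ℕ} (b : Ideal (MvPolynomial (Fin (n + 2)) K))
    (hmon : IsMonomialIdeal b) (hB : BorelFixed b) :
    (∃ k0 : ℕ, ∀ k ≥ k0,
      Submodule.colon b
        (Ideal.span {monomial (Finsupp.single (Fin.last (n + 1)) k) (1 : K)}) = satLast b) ∧
    satLast b = Ideal.span
      ((fun p : Fin (n + 2) →₀ ℕ => monomial (Finsupp.erase (Fin.last (n + 1)) p) (1 : K)) ''
        {p | IsMinGen b p}) := by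
  classical
  have hmono : Monotone (fun k : ℕ => Submodule.colon b
      (Ideal.span {monomial (Finsupp.single (Fin.last (n + 1)) k) (1 : K)})) := by
    intro k l hkl f hf
    rw [Ideal.mem_colon_span_singleton] at hf ⊢
    have hsingle : Finsupp.single (Fin.last (n + 1)) l =
        Finsupp.single (Fin.last (n + 1)) k + Finsupp.single (Fin.last (n + 1)) (l - k) := by
      rw [← Finsupp.single_add]
      congr 1
      omega
    have h2 := Ideal.mul_mem_right
      (monomial (Finsupp.single (Fin.last (n + 1)) (l - k)) (1 : K)) _ hf
    rwa [mul_assoc, monomial_mul, one_mul, ← hsingle] at h2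
  set c : ℕ →o Ideal (MvPolynomial (Fin (n + 2)) K) := ⟨_, hmono⟩ with hc
  obtain ⟨k0, hk0⟩ := monotone_stabilizes_iff_noetherian.mpr inferInstance c
  have hsat : satLast b = c k0 := by
    apply le_antisymm
    · refine iSup_le fun k => ?_
      calc c k ≤ c (max k k0) := c.monotone (le_max_left _ _)
        _ = c k0 := (hk0 _ (le_max_right _ _)).symm
    · exact le_iSup (fun k => Submodule.colon b
        (Ideal.span {monomial (Finsupp.single (Fin.last (n + 1)) k) (1 : K)})) k0
  constructor
  · refine ⟨k0, fun k hk => ?_⟩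
    rw [hsat]
    exact (hk0 k hk).symm
  · apply le_antisymm
    · -- satLast ≤ span
      rw [hsat]
      intro f hf
      rw [show (c k0 : Ideal (MvPolynomial (Fin (n + 2)) K)) = Submodule.colon b
        (Ideal.span {monomial (Finsupp.single (Fin.last (n + 1)) k0) (1 : K)}) from rfl,
        Ideal.mem_colon_span_singleton] at hf
      have key : ∀ q ∈ f.support, monomial q (1 : K) ∈ Ideal.span
          ((fun p : Fin (n + 2) →₀ ℕ =>
            monomial (Finsupp.erase (Fin.last (n + 1)) p) (1 : K)) '' {p | IsMinGen b p}) := by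
        intro q hq
        have hsup : monomial (q + Finsupp.single (Fin.last (n + 1)) k0) (1 : K) ∈ b := by
          apply hmon _ hf
          rw [mem_support_iff, coeff_mul_monomial, mul_one]
          exact mem_support_iff.mp hq
        obtain ⟨p, hp, hple⟩ := exists_minGen_le b _ hsup
        have h1 : Finsupp.erase (Fin.last (n + 1)) p ≤ q := by
          have h2 := erase_mono (Fin.last (n + 1)) hple
          rw [Finsupp.erase_add, Finsupp.erase_single, add_zero] at h2
          exact h2.trans (erase_le_self _ _)
        have heq : monomial q (1 : K) =
            monomial (Finsupp.erase (Fin.last (n + 1)) p) (1 : K) *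
              monomial (q - Finsupp.erase (Fin.last (n + 1)) p) (1 : K) := by
          rw [monomial_mul, one_mul, add_tsub_cancel_of_le h1]
        rw [heq]
        exact Ideal.mul_mem_right _ _ (Ideal.subset_span ⟨p, hp, rfl⟩)
      rw [← support_sum_monomial_coeff f]
      refine Submodule.sum_mem _ fun q hq => ?_
      rw [show monomial q (coeff q f) = C (coeff q f) * monomial q (1 : K) by
        rw [C_mul_monomial, mul_one]]
      exact Ideal.mul_mem_left _ _ (key q hq)
    · -- span ≤ satLast
      refine Ideal.span_le.mpr ?_
      rintro _ ⟨p, hp, rfl⟩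
      have hmem : monomial (Finsupp.erase (Fin.last (n + 1)) p) (1 : K) ∈
          Submodule.colon b (Ideal.span
            {monomial (Finsupp.single (Fin.last (n + 1)) (p (Fin.last (n + 1)))) (1 : K)}) := by
        rw [Ideal.mem_colon_span_singleton, monomial_mul, one_mul, Finsupp.erase_add_single]
        exact hp.1
      exact le_iSup (fun k => Submodule.colon b
        (Ideal.span {monomial (Finsupp.single (Fin.last (n + 1)) k) (1 : K)}))
        (p (Fin.last (n + 1))) hmem
end
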